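/- Assume Σ_j Γᵏⱼ = Γᵏ for every k = 1,…,m. Then for every α ∈ 𝓕_m(Ω), every k ∈ {1,…,m} and every j ∈ {1,…,N_k}, the gradients satisfy Γᵏ·∇_{zᵏⱼ}F(0) = Γᵏⱼ·∇_{aᵏ}𝓗(α) in ℝ². In particular, if α is a critical point of 𝓗 then ∇F(0) = 0. -/

import Mathlib

noncomputable section

open Real

/-- The plane `ℝ²` with its Euclidean structure. -/
abbrev R2 : Type := EuclideanSpace ℝ (Fin 2)

/-- The standard symplectic matrix `J` (rotation by `-π/2`): `J(x₁,x₂) = (x₂,-x₁)`. -/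
def Jrot (x : R2) : R2 := (WithLp.equiv 2 (Fin 2 → ℝ)).symm ![x 1, -(x 0)]

/-- The rotation `e^{θJ}` of the plane. -/
def rotate (θ : ℝ) (x : R2) : R2 :=
  (WithLp.equiv 2 (Fin 2 → ℝ)).symm
    ![Real.cos θ * x 0 + Real.sin θ * x 1, -Real.sin θ * x 0 + Real.cos θ * x 1]

/-- The generalized Green's function `G(x,y) = -(1/2π) log|x-y| - g(x,y)`. -/
def Gf (g : R2 → R2 → ℝ) (x y : R2) : ℝ := -(1 / (2 * π)) * Real.log ‖x - y‖ - g x y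

/-- `z` is a configuration of pairwise distinct points of `Ω`. -/
def Conf {ι : Type*} (Ω : Set R2) (z : ι → R2) : Prop :=
  (∀ i, z i ∈ Ω) ∧ ∀ i i', i ≠ i' → z i ≠ z i'

/-- The `m`-vortex Hamiltonian `𝓗`. -/
def mHam {m : ℕ} (g : R2 → R2 → ℝ) (Γ : Fin m → ℝ) (a : Fin m → R2) : ℝ :=
  (∑ k, ∑ k', if k ≠ k' then Γ k * Γ k' * Gf g (a k) (a k') else 0)
    - ∑ k, Γ k ^ 2 * g (a k) (a k)

/-- Partial gradient `∇_{zᵢ} f(z) ∈ ℝ²` of a function of several planar variables. -/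
def pgrad {ι : Type*} [DecidableEq ι] (f : (ι → R2) → ℝ) (z : ι → R2) (i : ι) : R2 :=
  gradient (fun p => f (Function.update z i p)) (z i)

/-- `i`-th block of the Hessian of `f` at `z` applied to `w`, `(∇²f(z)w)ᵢ ∈ ℝ²`. -/
def hessVec {ι : Type*} [Fintype ι] [DecidableEq ι] (f : (ι → R2) → ℝ) (z w : ι → R2)
    (i : ι) : R2 :=
  gradient (fun p => fderiv ℝ f (Function.update z i p) w) (z i)

/-- Kernel of the Hessian `∇²f(z)` viewed as a map into the dual space. -/
def hessKer {ι : Type*} [Fintype ι] (f : (ι → R2) → ℝ) (z : ι → R2) :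
    Submodule ℝ (ι → R2) :=
  LinearMap.ker (fderiv ℝ (fderiv ℝ f) z).toLinearMap

/-- `z : ℝ → (ι → ℝ²)` solves the vortex system `Γᵢ żᵢ = J ∇_{zᵢ} Ham(z)` on `I`. -/
def IsVortexSol {ι : Type*} [Fintype ι] [DecidableEq ι] (Γv : ι → ℝ)
    (Ham : (ι → R2) → ℝ) (I : Set ℝ) (z : ℝ → ι → R2) : Prop :=
  ∀ t ∈ I, ∀ i, HasDerivAt (fun s => Γv i • z s i) (Jrot (pgrad Ham (z t) i)) t

/-- The whole-plane `n`-vortex Hamiltonian. -/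
def planeHam {n : ℕ} (Γk : Fin n → ℝ) (z : Fin n → R2) : ℝ :=
  -(1 / (2 * π)) * ∑ j, ∑ j', if j ≠ j' then Γk j * Γk j' * Real.log ‖z j - z j'‖ else 0

/-- `Z` is a relative equilibrium `Z(t) = e^{±J t/ordσ} z⁰` of the whole-plane system. -/
def IsRelEq {n : ℕ} (Γk : Fin n → ℝ) (ordσ : ℕ) (Z : ℝ → Fin n → R2) : Prop :=
  (∃ ω : ℝ, (ω = 1 ∨ ω = -1) ∧ ∃ z0 : Fin n → R2,
      (∀ j j', j ≠ j' → z0 j ≠ z0 j') ∧ ∀ t j, Z t j = rotate (ω * t / (ordσ : ℝ)) (z0 j)) ∧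
  IsVortexSol Γk (planeHam Γk) Set.univ Z

/-- `w` solves the linearization `Γⱼẇⱼ = J(∇²H_{ℝ²}(Z(t))w)ⱼ` and is `σ`-symmetric. -/
def IsLinSol {n : ℕ} (Γk : Fin n → ℝ) (σ : Equiv.Perm (Fin n)) (Z : ℝ → Fin n → R2)
    (w : ℝ → Fin n → R2) : Prop :=
  (∀ t j, HasDerivAt (fun s => Γk j • w s j)
      (Jrot (hessVec (planeHam Γk) (Z t) (w t) j)) t) ∧
  ∀ t j, w (t + 2 * π) (σ⁻¹ j) = w t j

/-- `σ`-nondegeneracy of a relative equilibrium: `σ*Z(·+2π) = Z` and the space of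
`σ`-symmetric solutions of the linearized equation is exactly 3-dimensional. -/
def SigmaNondeg {n : ℕ} (Γk : Fin n → ℝ) (σ : Equiv.Perm (Fin n)) (Z : ℝ → Fin n → R2) :
    Prop :=
  (∀ t j, Z (t + 2 * π) (σ⁻¹ j) = Z t j) ∧
  ∃ W : Fin 3 → ℝ → Fin n → R2,
    LinearIndependent ℝ W ∧ (∀ p, IsLinSol Γk σ Z (W p)) ∧
    ∀ w, IsLinSol Γk σ Z w → w ∈ Submodule.span ℝ (Set.range W)

/-- The `N`-vortex Hamiltonian `H` on clustered configurations. -/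
def NHam {m : ℕ} {Nk : Fin m → ℕ} (g : R2 → R2 → ℝ)
    (Γc : (k : Fin m) → Fin (Nk k) → ℝ) (z : ((k : Fin m) × Fin (Nk k)) → R2) : ℝ :=
  (∑ i, ∑ i', if i ≠ i' then Γc i.1 i.2 * Γc i'.1 i'.2 * Gf g (z i) (z i') else 0)
    - ∑ i, Γc i.1 i.2 ^ 2 * g (z i) (z i)

/-- Square of the `H¹_T` distance of two (`C¹`, `T`-periodic) curves. -/
def H1distSq {ι : Type*} [Fintype ι] (T : ℝ) (u v : ℝ → ι → R2) : ℝ :=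
  ∫ t in (0:ℝ)..T,
    ((∑ i, ‖u t i - v t i‖ ^ 2) +
      ∑ i, ‖deriv (fun s => u s i) t - deriv (fun s => v s i) t‖ ^ 2)

/-- The function `F` appearing in the rescaled Hamiltonian. -/
def Ffun {m : ℕ} {Nk : Fin m → ℕ} (g : R2 → R2 → ℝ)
    (Γc : (k : Fin m) → Fin (Nk k) → ℝ) (α : Fin m → R2)
    (z : ((k : Fin m) × Fin (Nk k)) → R2) : ℝ :=
  (∑ i, ∑ i', if i.1 ≠ i'.1 then
      Γc i.1 i.2 * Γc i'.1 i'.2 * Gf g (z i + α i.1) (z i' + α i'.1) else 0)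
    - ∑ k, ∑ j, ∑ j', Γc k j * Γc k j' * g (z ⟨k, j⟩ + α k) (z ⟨k, j'⟩ + α k)

/-- The decoupled limit Hamiltonian `H₀(u) = Σₖ Hᵏ_{ℝ²}(uᵏ)`. -/
def H0 {m : ℕ} {Nk : Fin m → ℕ} (Γc : (k : Fin m) → Fin (Nk k) → ℝ)
    (u : ((k : Fin m) × Fin (Nk k)) → R2) : ℝ :=
  ∑ k, planeHam (Γc k) (fun j => u ⟨k, j⟩)

/-- The rescaled Hamiltonian `H_r(u) = H₀(u) + F(ru) - 𝓗(α)`. -/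
def Hr {m : ℕ} {Nk : Fin m → ℕ} (g : R2 → R2 → ℝ) (Γ : Fin m → ℝ)
    (Γc : (k : Fin m) → Fin (Nk k) → ℝ) (α : Fin m → R2) (r : ℝ)
    (u : ((k : Fin m) × Fin (Nk k)) → R2) : ℝ :=
  H0 Γc u + Ffun g Γc α (r • u) - mHam g Γ α

/-! Moving one point `x` (the vortex `zᵏⱼ` in `F`, the point `aᵏ` in `𝓗`) changes the energy only
through its interactions. With `w = Γᵏⱼ` (resp. `Γᵏ`) and `Σⱼ Γᵏⱼ = Γᵏ`, both are, up to a
constant, `w² (2 g(x, αᵏ) - g(x, x)) + 2 w V(x)` with the same potential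
`V(x) = Σₖ' Γᵏ' K(k, k', x, αᵏ')`, where the kernel `K` is `G` between different clusters and `-g`
within one. By the symmetry of `g`, `x ↦ 2 g(x, αᵏ) - g(x, x)` is stationary at `αᵏ`, so both
gradients are the multiples `2 w ∇V(αᵏ)`. -/

open Finset Function

theorem Gf_comm {g : R2 → R2 → ℝ} (hsymm : ∀ x y, g x y = g y x) (x y : R2) :
    Gf g x y = Gf g y x := by
  rw [Gf, Gf, norm_sub_rev, hsymm]

def clusterKernel {κ : Type*} [DecidableEq κ] (g : R2 → R2 → ℝ) (k k' : κ) (x y : R2) : ℝ :=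
  if k ≠ k' then Gf g x y else -g x y

theorem clusterKernel_comm {κ : Type*} [DecidableEq κ] {g : R2 → R2 → ℝ}
    (hsymm : ∀ x y, g x y = g y x) (k k' : κ) (x y : R2) :
    clusterKernel g k k' x y = clusterKernel g k' k y x := by
  simp only [clusterKernel, ne_comm (a := k), Gf_comm hsymm x y, hsymm x y]

def clusterPotential {m : ℕ} (g : R2 → R2 → ℝ) (Γ : Fin m → ℝ) (α : Fin m → R2) (k : Fin m)
    (x : R2) : ℝ :=
  ∑ k', Γ k' * clusterKernel g k k' x (α k')

theorem mHam_eq_sum_clusterKernel {m : ℕ} (g : R2 → R2 → ℝ) (Γ : Fin m → ℝ) (a : Fin m → R2) :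
    mHam g Γ a = ∑ k, ∑ k', Γ k * Γ k' * clusterKernel g k k' (a k) (a k') := by
  have hdiag : ∀ k, Γ k ^ 2 * g (a k) (a k) =
      ∑ k', if k = k' then Γ k * Γ k' * g (a k) (a k') else 0 := by
    intro k; rw [sum_ite_eq]; simp [sq]
  simp only [mHam, hdiag, ← sum_sub_distrib, clusterKernel]
  refine sum_congr rfl fun k _ => sum_congr rfl fun k' _ => ?_
  by_cases h : k = k' <;> simp [h]

theorem Ffun_eq_sum_clusterKernel {m : ℕ} {Nk : Fin m → ℕ} (g : R2 → R2 → ℝ)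
    (Γc : (k : Fin m) → Fin (Nk k) → ℝ) (α : Fin m → R2) (z : (k : Fin m) × Fin (Nk k) → R2) :
    Ffun g Γc α z = ∑ i, ∑ i', Γc i.1 i.2 * Γc i'.1 i'.2 *
      clusterKernel g i.1 i'.1 (z i + α i.1) (z i' + α i'.1) := by
  have hclusters : ∑ k, ∑ j, ∑ j', Γc k j * Γc k j' * g (z ⟨k, j⟩ + α k) (z ⟨k, j'⟩ + α k) =
      ∑ i, ∑ i' : (k : Fin m) × Fin (Nk k), if i.1 = i'.1 then
        Γc i.1 i.2 * Γc i'.1 i'.2 * g (z i + α i.1) (z i' + α i'.1) else 0 := by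
    rw [Fintype.sum_sigma]
    refine sum_congr rfl fun k _ => sum_congr rfl fun j _ => ?_
    rw [Fintype.sum_sigma, Fintype.sum_eq_single k fun K hK => by simp [Ne.symm hK]]
    simp
  rw [Ffun, hclusters, ← sum_sub_distrib]
  refine sum_congr rfl fun i _ => ?_
  rw [← sum_sub_distrib]
  refine sum_congr rfl fun i' _ => ?_
  by_cases h : i.1 = i'.1 <;> simp [clusterKernel, h]

theorem exists_sum_sum_update_eq {ι E : Type*} [Fintype ι] [DecidableEq ι] (w : ι → ℝ)
    {K : ι → ι → E → E → ℝ} (hK : ∀ i i' x y, K i i' x y = K i' i y x) (z : ι → E) (I : ι) :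
    ∃ C, ∀ p, ∑ i, ∑ i', w i * w i' * K i i' (update z I p i) (update z I p i') =
      C + w I ^ 2 * (K I I p p - 2 * K I I p (z I)) + 2 * w I * ∑ i, w i * K I i p (z i) := by
  refine ⟨∑ i ∈ univ.erase I, ∑ i' ∈ univ.erase I, w i * w i' * K i i' (z i) (z i'), fun p => ?_⟩
  have hz : ∀ i ∈ univ.erase I, update z I p i = z i := fun i hi =>
    update_of_ne (ne_of_mem_erase hi) _ _
  have hrow : ∑ i ∈ univ.erase I, w I * w i * K I i p (update z I p i) =
      w I * ∑ i, w i * K I i p (z i) - w I ^ 2 * K I I p (z I) := by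
    rw [sum_congr rfl fun i hi => by rw [hz i hi, mul_assoc], ← mul_sum,
      ← add_sum_erase _ _ (mem_univ I)]
    ring
  have hcol : ∑ i ∈ univ.erase I, w i * w I * K i I (update z I p i) p =
      ∑ i ∈ univ.erase I, w I * w i * K I i p (update z I p i) :=
    sum_congr rfl fun i _ => by rw [hK, mul_comm (w i)]
  rw [← add_sum_erase _ _ (mem_univ I), ← add_sum_erase _ _ (mem_univ I),
    sum_congr rfl fun i _ => (add_sum_erase _ _ (mem_univ I)).symm, sum_add_distrib,
    sum_congr rfl fun i hi => sum_congr rfl fun i' hi' => by rw [hz i hi, hz i' hi'],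
    update_self, hcol, hrow]
  ring

theorem hasFDerivAt_two_mul_sub_diag_of_comm {E : Type*} [NormedAddCommGroup E]
    [NormedSpace ℝ E] {f : E → E → ℝ} (hf : ∀ x y, f x y = f y x) {x : E}
    (hd : DifferentiableAt ℝ (uncurry f) (x, x)) :
    HasFDerivAt (fun y => 2 * f y x - f y y) (0 : E →L[ℝ] ℝ) x := by
  set D := fderiv ℝ (uncurry f) (x, x)
  have hD : HasFDerivAt (uncurry f) D (x, x) := hd.hasFDerivAt
  have hD_swap : ∀ u v, D (u, v) = D (v, u) := by
    have hswap := hD.comp (x, x) (ContinuousLinearEquiv.prodComm ℝ E E).hasFDerivAt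
    have huncurry : uncurry f ∘ ContinuousLinearEquiv.prodComm ℝ E E = uncurry f :=
      funext fun q => hf q.2 q.1
    rw [huncurry] at hswap
    intro u v
    exact congrArg (fun L : E × E →L[ℝ] ℝ => L (v, u)) (hswap.unique hD)
  have hleft : HasFDerivAt (fun y => f y x) (D.comp ((ContinuousLinearMap.id ℝ E).prod 0)) x :=
    HasFDerivAt.comp (f := fun y => (y, x)) x hD
      ((hasFDerivAt_id x).prodMk (hasFDerivAt_const x x))
  have hdiag : HasFDerivAt (fun y => f y y)
      (D.comp ((ContinuousLinearMap.id ℝ E).prod (ContinuousLinearMap.id ℝ E))) x :=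
    HasFDerivAt.comp (f := fun y => (y, y)) x hD ((hasFDerivAt_id x).prodMk (hasFDerivAt_id x))
  have hzero : (2 : ℝ) • D.comp ((ContinuousLinearMap.id ℝ E).prod 0)
      - D.comp ((ContinuousLinearMap.id ℝ E).prod (ContinuousLinearMap.id ℝ E)) = 0 := by
    ext u
    have hsplit : D (u, u) = D (u, 0) + D (0, u) := by
      rw [← map_add, Prod.mk_add_mk, add_zero, zero_add]
    simp [hsplit, hD_swap 0 u]
    ring
  exact ((hleft.const_mul 2).fun_sub hdiag).congr_fderiv hzero

theorem differentiableAt_Gf_left {g : R2 → R2 → ℝ} {x y : R2} (hxy : x ≠ y)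
    (hgd : DifferentiableAt ℝ (uncurry g) (x, y)) : DifferentiableAt ℝ (fun x' => Gf g x' y) x := by
  have hnorm : ‖x - y‖ ≠ 0 := norm_ne_zero_iff.mpr (sub_ne_zero.mpr hxy)
  unfold Gf
  have := DifferentiableAt.comp (g := uncurry g) (f := fun x' => (x', y)) x hgd
    (differentiableAt_id.prodMk (differentiableAt_const y))
  exact ((((differentiableAt_id.sub_const y).norm ℝ (sub_ne_zero.mpr hxy)).log hnorm).const_mul
    _).sub this

theorem differentiableAt_clusterPotential {m : ℕ} {g : R2 → R2 → ℝ} (Γ : Fin m → ℝ)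
    {α : Fin m → R2} {k : Fin m} (hα : ∀ k', k ≠ k' → α k ≠ α k')
    (hgd : ∀ k', DifferentiableAt ℝ (uncurry g) (α k, α k')) :
    DifferentiableAt ℝ (clusterPotential g Γ α k) (α k) := by
  unfold clusterPotential clusterKernel
  refine DifferentiableAt.fun_sum fun k' _ => DifferentiableAt.const_mul ?_ _
  split_ifs with hk
  · exact differentiableAt_Gf_left (hα k' hk) (hgd k')
  · exact (DifferentiableAt.comp (g := uncurry g) (f := fun x => (x, α k')) _ (hgd k')
      (differentiableAt_id.prodMk (differentiableAt_const _))).neg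

theorem gradient_const_add_mul_add_mul {F : Type*} [NormedAddCommGroup F]
    [InnerProductSpace ℝ F] [CompleteSpace F] {s V : F → ℝ} {x : F}
    (hs : HasFDerivAt s (0 : F →L[ℝ] ℝ) x) (hV : DifferentiableAt ℝ V x) (C a b : ℝ) :
    gradient (fun y => C + a * s y + b * V y) x = b • gradient V x := by
  have h : HasFDerivAt (fun y => C + a * s y + b * V y) (b • fderiv ℝ V x) x := by
    simpa using ((hs.const_mul a).const_add C).fun_add (hV.hasFDerivAt.const_mul b)
  rw [gradient, h.fderiv, map_smul, gradient]

theorem gradient_comp_add_right {F : Type*} [NormedAddCommGroup F] [InnerProductSpace ℝ F]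
    [CompleteSpace F] (f : F → ℝ) (a x : F) :
    gradient (fun y => f (y + a)) x = gradient f (x + a) := by
  rw [gradient, fderiv_comp_add_right, gradient]

theorem exists_mHam_update_eq {m : ℕ} {g : R2 → R2 → ℝ} (hsymm : ∀ x y, g x y = g y x)
    (Γ : Fin m → ℝ) (α : Fin m → R2) (k : Fin m) :
    ∃ C, ∀ x, mHam g Γ (update α k x) =
      C + Γ k ^ 2 * (2 * g x (α k) - g x x) + 2 * Γ k * clusterPotential g Γ α k x := by
  obtain ⟨C, hC⟩ := exists_sum_sum_update_eq Γ (clusterKernel_comm hsymm) α k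
  refine ⟨C, fun x => ?_⟩
  rw [mHam_eq_sum_clusterKernel, hC, clusterPotential]
  simp only [clusterKernel, ne_eq, not_true_eq_false, if_false]
  ring

theorem exists_Ffun_update_eq {m : ℕ} {Nk : Fin m → ℕ} {g : R2 → R2 → ℝ}
    (hsymm : ∀ x y, g x y = g y x) {Γ : Fin m → ℝ} {Γc : (k : Fin m) → Fin (Nk k) → ℝ}
    (hΓc : ∀ k, ∑ j, Γc k j = Γ k) (α : Fin m → R2) (k : Fin m) (j : Fin (Nk k)) :
    ∃ C, ∀ p, Ffun g Γc α (update 0 ⟨k, j⟩ p) =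
      C + Γc k j ^ 2 * (2 * g (p + α k) (α k) - g (p + α k) (p + α k))
        + 2 * Γc k j * clusterPotential g Γ α k (p + α k) := by
  obtain ⟨C, hC⟩ := exists_sum_sum_update_eq (fun i : (k : Fin m) × Fin (Nk k) => Γc i.1 i.2)
    (K := fun i i' x y => clusterKernel g i.1 i'.1 (x + α i.1) (y + α i'.1))
    (fun i i' x y => clusterKernel_comm hsymm _ _ _ _) 0 ⟨k, j⟩
  have hpotential : ∀ q, ∑ i : (k : Fin m) × Fin (Nk k),
      Γc i.1 i.2 * clusterKernel g k i.1 q (α i.1) = clusterPotential g Γ α k q := by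
    intro q
    simp only [Fintype.sum_sigma, clusterPotential, ← hΓc, sum_mul]
  refine ⟨C, fun p => ?_⟩
  rw [Ffun_eq_sum_clusterKernel, hC]
  simp only [Pi.zero_apply, zero_add, hpotential]
  simp only [clusterKernel, ne_eq, not_true_eq_false, if_false]
  ring

theorem pgrad_mHam_eq {m : ℕ} {g : R2 → R2 → ℝ} (hsymm : ∀ x y, g x y = g y x)
    (Γ : Fin m → ℝ) {α : Fin m → R2} {k : Fin m} (hα : ∀ k', k ≠ k' → α k ≠ α k')
    (hgd : ∀ k', DifferentiableAt ℝ (uncurry g) (α k, α k')) :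
    pgrad (mHam g Γ) α k = (2 * Γ k) • gradient (clusterPotential g Γ α k) (α k) := by
  obtain ⟨C, hC⟩ := exists_mHam_update_eq hsymm Γ α k
  rw [pgrad, funext hC, gradient_const_add_mul_add_mul
    (hasFDerivAt_two_mul_sub_diag_of_comm hsymm (hgd k))
    (differentiableAt_clusterPotential Γ hα hgd)]

theorem pgrad_Ffun_eq {m : ℕ} {Nk : Fin m → ℕ} {g : R2 → R2 → ℝ}
    (hsymm : ∀ x y, g x y = g y x) {Γ : Fin m → ℝ} {Γc : (k : Fin m) → Fin (Nk k) → ℝ}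
    (hΓc : ∀ k, ∑ j, Γc k j = Γ k) {α : Fin m → R2} {k : Fin m} (j : Fin (Nk k))
    (hα : ∀ k', k ≠ k' → α k ≠ α k') (hgd : ∀ k', DifferentiableAt ℝ (uncurry g) (α k, α k')) :
    pgrad (Ffun g Γc α) 0 ⟨k, j⟩ = (2 * Γc k j) • gradient (clusterPotential g Γ α k) (α k) := by
  obtain ⟨C, hC⟩ := exists_Ffun_update_eq hsymm hΓc α k j
  rw [pgrad, funext hC, Pi.zero_apply,
    gradient_comp_add_right (fun y => C + Γc k j ^ 2 * (2 * g y (α k) - g y y)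
      + 2 * Γc k j * clusterPotential g Γ α k y), zero_add,
    gradient_const_add_mul_add_mul (hasFDerivAt_two_mul_sub_diag_of_comm hsymm (hgd k))
      (differentiableAt_clusterPotential Γ hα hgd)]

theorem statement6_general
    (Ω : Set R2) (hΩopen : IsOpen Ω)
    (g : R2 → R2 → ℝ)
    (hg : ContDiffOn ℝ 2 (fun p : R2 × R2 => g p.1 p.2) (Ω ×ˢ Ω))
    (hgsymm : ∀ x y, g x y = g y x)
    (m : ℕ) (Γ : Fin m → ℝ) (hΓ : ∀ k, Γ k ≠ 0)
    (Nk : Fin m → ℕ)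
    (Γc : (k : Fin m) → Fin (Nk k) → ℝ)
    (hA2 : ∀ k, ∑ j, Γc k j = Γ k)
    (α : Fin m → R2) (hα : Conf Ω α) :
    (∀ (k : Fin m) (j : Fin (Nk k)),
        Γ k • pgrad (Ffun g Γc α) 0 ⟨k, j⟩ = Γc k j • pgrad (mHam g Γ) α k) ∧
    ((∀ k, pgrad (mHam g Γ) α k = 0) → ∀ i, pgrad (Ffun g Γc α) 0 i = 0) := by
  obtain ⟨hαΩ, hαinj⟩ := hα
  have hgd : ∀ k k', DifferentiableAt ℝ (uncurry g) (α k, α k') := fun k k' =>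
    (hg.contDiffAt ((hΩopen.prod hΩopen).mem_nhds ⟨hαΩ k, hαΩ k'⟩)).differentiableAt
      (by norm_num)
  have key : ∀ (k : Fin m) (j : Fin (Nk k)),
      Γ k • pgrad (Ffun g Γc α) 0 ⟨k, j⟩ = Γc k j • pgrad (mHam g Γ) α k := fun k j => by
    rw [pgrad_Ffun_eq hgsymm hA2 j (hαinj k) (hgd k), pgrad_mHam_eq hgsymm Γ (hαinj k) (hgd k),
      smul_smul, smul_smul]
    congr 1
    ring
  refine ⟨key, fun hcrit ⟨k, j⟩ => ?_⟩
  have h := key k j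
  rw [hcrit k, smul_zero] at h
  exact (smul_eq_zero.mp h).resolve_left (hΓ k)

/-- `Γᵏ·∇_{zᵏⱼ}F(0) = Γᵏⱼ·∇_{aᵏ}𝓗(α)`; if `α` is critical then `∇F(0) = 0`. -/
theorem statement6
    (Ω : Set R2) (hΩopen : IsOpen Ω) (hΩconn : IsConnected Ω)
    (g : R2 → R2 → ℝ)
    (hg : ContDiffOn ℝ 2 (fun p : R2 × R2 => g p.1 p.2) (Ω ×ˢ Ω))
    (hgsymm : ∀ x y, g x y = g y x)
    (m : ℕ) (Γ : Fin m → ℝ) (hΓ : ∀ k, Γ k ≠ 0)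
    (Nk : Fin m → ℕ) (hNk : ∀ k, 1 ≤ Nk k)
    (Γc : (k : Fin m) → Fin (Nk k) → ℝ) (hΓc : ∀ k j, Γc k j ≠ 0)
    (hA2 : ∀ k, ∑ j, Γc k j = Γ k)
    (α : Fin m → R2) (hα : Conf Ω α) :
    (∀ (k : Fin m) (j : Fin (Nk k)),
        Γ k • pgrad (Ffun g Γc α) 0 ⟨k, j⟩ = Γc k j • pgrad (mHam g Γ) α k) ∧
    ((∀ k, pgrad (mHam g Γ) α k = 0) → ∀ i, pgrad (Ffun g Γc α) 0 i = 0) :=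
  statement6_general Ω hΩopen g hg hgsymm m Γ hΓ Nk Γc hA2 α hα
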